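/- (Sufficiency direction of Theorem 1) Let (X,P) be a rationalizable system of choice probabilities whose probability flow diagram has no pair of supported branching paths. Then the rationalizing distribution over linear orders is unique. -/

import Mathlib

open Finset
open scoped Classical

/-- A linear order on a finite set `α`, encoded as a ranking bijection to `Fin (card α)`;
higher value means more preferred. -/
abbrev RankOrd (α : Type*) [Fintype α] := α ≃ Fin (Fintype.card α)

variable {α : Type*} [Fintype α] [DecidableEq α]

/-- `ν` is a probability distribution over linear orders. -/
def IsDist [Fintype α] (ν : RankOrd α → ℝ) : Prop :=
  (∀ π, 0 ≤ ν π) ∧ ∑ π : RankOrd α, ν π = 1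

/-- The choice probabilities induced by a distribution over linear orders. -/
noncomputable def choiceProb (ν : RankOrd α → ℝ) (A : Finset α) (x : α) : ℝ :=
  ∑ π : RankOrd α, if ∀ y ∈ A, y ≠ x → (π y : ℕ) < (π x : ℕ) then ν π else 0

/-- `ν` rationalizes the system of choice probabilities `P`. -/
def Rationalizes (ν : RankOrd α → ℝ) (P : Finset α → α → ℝ) : Prop :=
  IsDist ν ∧ ∀ A : Finset α, A.Nonempty → ∀ x ∈ A, P A x = choiceProb ν A x

/-- The Block–Marschak polynomial `q(x,A)` of a system of choice probabilities `P`. -/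
noncomputable def bm (P : Finset α → α → ℝ) (x : α) (A : Finset α) : ℝ :=
  ∑ A' ∈ Finset.univ.powerset.filter (fun A' => A ⊆ A'),
    (-1 : ℝ) ^ (A' \ A).card * P A' x

/-- A path: a maximal chain `X = A_0 ⊋ A_1 ⊋ ⋯ ⊋ A_{|X|} = ∅` decreasing by one element. -/
def IsPath (ρ : ℕ → Finset α) : Prop :=
  ρ 0 = Finset.univ ∧ ρ (Fintype.card α) = ∅ ∧
    ∀ i < Fintype.card α, ρ (i + 1) ⊆ ρ i ∧ (ρ i \ ρ (i + 1)).card = 1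

/-- A supported path: all Block–Marschak edge weights along it are strictly positive. -/
def SupportedPath (P : Finset α → α → ℝ) (ρ : ℕ → Finset α) : Prop :=
  IsPath ρ ∧ ∀ i < Fintype.card α, ∀ x ∈ ρ i \ ρ (i + 1), 0 < bm P x (ρ i)

/-- Two paths are branching: they agree on a consecutive block of nodes
`{i,…,j} ⊆ {1,…,|X|-1}` while differing at positions `i-1` and `j+1`. -/
def BranchingPair (ρ ρ' : ℕ → Finset α) : Prop :=
  ∃ i j, 1 ≤ i ∧ i ≤ j ∧ j ≤ Fintype.card α - 1 ∧
    ρ (i - 1) ≠ ρ' (i - 1) ∧ ρ (j + 1) ≠ ρ' (j + 1) ∧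
    ∀ m, i ≤ m → m ≤ j → ρ m = ρ' m

/-- The path associated with the linear order `π`: `A_i` is `X` minus the top `i` elements. -/
def pathOf (π : RankOrd α) : ℕ → Finset α :=
  fun i => Finset.univ.filter (fun w => (π w : ℕ) < Fintype.card α - i)

/-- The weak upper contour set of `x` according to `π`. -/
def upper (π : RankOrd α) (x : α) : Finset α :=
  Finset.univ.filter (fun w => (π x : ℕ) ≤ (π w : ℕ))

/-- `π ∈ M_{x,A}`: `π` ranks `X \ A` above `x` and `x` above `A \ {x}`. -/
def inM (π : RankOrd α) (x : α) (A : Finset α) : Prop :=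
  (∀ z, z ∉ A → (π x : ℕ) < (π z : ℕ)) ∧ ∀ y ∈ A, y ≠ x → (π y : ℕ) < (π x : ℕ)

set_option linter.unusedSectionVars false
set_option maxHeartbeats 1000000

section Aux
variable {α : Type*} [Fintype α] [DecidableEq α]

lemma card_filter_lt (σ : RankOrd α) (t : ℕ) (ht : t ≤ Fintype.card α) :
    (Finset.univ.filter fun w => (σ w : ℕ) < t).card = t := by
  have h1 : (Finset.univ.filter fun w => (σ w : ℕ) < t)
      = ((Finset.range t).attachFin (fun m hm => lt_of_lt_of_le (mem_range.1 hm) ht)).map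
        σ.symm.toEmbedding := by
    ext w
    simp [Finset.mem_map, Finset.mem_attachFin, Equiv.symm_apply_eq]
  rw [h1, Finset.card_map, Finset.card_attachFin, Finset.card_range]

lemma mem_pathOf {π : RankOrd α} {i : ℕ} {w : α} :
    w ∈ pathOf π i ↔ (π w : ℕ) < Fintype.card α - i := by simp [pathOf]

lemma pathOf_zero (π : RankOrd α) : pathOf π 0 = Finset.univ := by
  ext w; simp [pathOf, (π w).isLt]

lemma pathOf_of_le {π : RankOrd α} {i : ℕ} (h : Fintype.card α ≤ i) : pathOf π i = ∅ := by
  ext w; simp [pathOf, Nat.sub_eq_zero_of_le h]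

lemma card_pathOf (π : RankOrd α) {i : ℕ} (h : i ≤ Fintype.card α) :
    (pathOf π i).card = Fintype.card α - i :=
  card_filter_lt π _ (Nat.sub_le _ _)

/-- the element removed at step i -/
noncomputable def topAt (π : RankOrd α) (i : ℕ) (h : i < Fintype.card α) : α :=
  π.symm ⟨Fintype.card α - 1 - i, by omega⟩

lemma pi_topAt (π : RankOrd α) (i : ℕ) (h : i < Fintype.card α) :
    (π (topAt π i h) : ℕ) = Fintype.card α - 1 - i := by
  simp [topAt]

lemma sdiff_pathOf (π : RankOrd α) (i : ℕ) (h : i < Fintype.card α) :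
    pathOf π i \ pathOf π (i + 1) = {topAt π i h} := by
  ext w
  simp only [Finset.mem_sdiff, mem_pathOf, Finset.mem_singleton, not_lt]
  constructor
  · rintro ⟨h1, h2⟩
    have : (π w : ℕ) = Fintype.card α - 1 - i := by omega
    have : π w = ⟨Fintype.card α - 1 - i, by omega⟩ := Fin.ext this
    simp [topAt, ← this]
  · rintro rfl
    rw [pi_topAt]; omega

lemma inM_topAt (π : RankOrd α) (i : ℕ) (h : i < Fintype.card α) :
    inM π (topAt π i h) (pathOf π i) := by
  constructor
  · intro z hz
    rw [mem_pathOf, not_lt] at hz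
    rw [pi_topAt]; omega
  · intro y hy hne
    rw [mem_pathOf] at hy
    rw [pi_topAt]
    have : (π y : ℕ) ≠ Fintype.card α - 1 - i := by
      intro he
      exact hne (by rw [← Equiv.symm_apply_apply π y, topAt]; congr 1; exact Fin.ext he)
    omega

lemma pathOf_injective : Function.Injective (pathOf (α := α)) := by
  intro σ τ h
  ext w
  have key : ∀ i, ((σ w : ℕ) < Fintype.card α - i ↔ (τ w : ℕ) < Fintype.card α - i) := by
    intro i
    constructor
    · intro hw; exact mem_pathOf.1 (h ▸ mem_pathOf.2 hw)
    · intro hw; exact mem_pathOf.1 (h ▸ mem_pathOf.2 hw)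
  have h1 := (key (Fintype.card α - 1 - (σ w : ℕ)))
  have h2 := (key (Fintype.card α - 1 - (τ w : ℕ)))
  have := (σ w).isLt; have := (τ w).isLt
  omega

lemma inM_pathOf_agree {σ π : RankOrd α} {i : ℕ} (h : i < Fintype.card α)
    (hM : inM σ (topAt π i h) (pathOf π i)) :
    pathOf σ i = pathOf π i ∧ pathOf σ (i + 1) = pathOf π (i + 1) := by
  set n := Fintype.card α with hn
  set x := topAt π i h with hx
  have hxA : x ∈ pathOf π i := by
    rw [mem_pathOf, pi_topAt]; omega
  have hcardA : (pathOf π i).card = n - i := card_pathOf π (le_of_lt h)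
  -- step 1 : (σ x : ℕ) = n - 1 - i
  have hsub1 : pathOf π i \ {x} ⊆ Finset.univ.filter fun w => (σ w : ℕ) < (σ x : ℕ) := by
    intro y hy
    rw [Finset.mem_sdiff, Finset.mem_singleton] at hy
    simp only [Finset.mem_filter, Finset.mem_univ, true_and]
    exact hM.2 y hy.1 hy.2
  have hc1 : n - i - 1 ≤ (σ x : ℕ) := by
    have := Finset.card_le_card hsub1
    rw [card_filter_lt σ _ (le_of_lt (σ x).isLt)] at this
    rw [Finset.card_sdiff_of_subset (by simpa using hxA), hcardA] at this
    simpa using this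
  have hsub2 : (Finset.univ.filter fun w => (σ w : ℕ) < (σ x : ℕ) + 1) ⊆ pathOf π i := by
    intro w hw
    simp only [Finset.mem_filter, Finset.mem_univ, true_and] at hw
    by_contra hwA
    have := hM.1 w hwA
    omega
  have hc2 : (σ x : ℕ) + 1 ≤ n - i := by
    have := Finset.card_le_card hsub2
    rwa [card_filter_lt σ _ (by have := (σ x).isLt; omega), hcardA] at this
  have hσx : (σ x : ℕ) = n - 1 - i := by omega
  -- step 2 : pathOf σ (i+1) = pathOf π (i+1)
  have hπx : (π x : ℕ) = n - 1 - i := pi_topAt π i h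
  have hwx : ∀ w, w = x ↔ (π w : ℕ) = n - 1 - i := fun w =>
    ⟨by rintro rfl; exact hπx, fun hw => π.injective (Fin.ext (by rw [hπx]; exact hw))⟩
  have hwxσ : ∀ w, w = x ↔ (σ w : ℕ) = n - 1 - i := fun w =>
    ⟨by rintro rfl; exact hσx, fun hw => σ.injective (Fin.ext (by rw [hσx]; exact hw))⟩
  have hAx : pathOf π (i + 1) = pathOf π i \ {x} := by
    ext w
    simp only [mem_pathOf, Finset.mem_sdiff, Finset.mem_singleton, hwx w]
    omega
  have h2 : pathOf σ (i + 1) = pathOf π (i + 1) := by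
    apply (Finset.eq_of_subset_of_card_le ?_ ?_).symm
    · rw [hAx]
      intro y hy
      rw [Finset.mem_sdiff, Finset.mem_singleton] at hy
      rw [mem_pathOf]
      have := hM.2 y hy.1 hy.2
      omega
    · rw [card_pathOf π (by omega), card_pathOf σ (by omega)]
  refine ⟨?_, h2⟩
  ext w
  rw [mem_pathOf, mem_pathOf]
  have hiff : (σ w : ℕ) < n - i ↔ (σ w : ℕ) < n - (i+1) ∨ w = x := by
    rw [hwxσ w]; omega
  have hiff2 : (π w : ℕ) < n - i ↔ (π w : ℕ) < n - (i+1) ∨ w = x := by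
    rw [hwx w]; omega
  rw [hiff, hiff2, ← mem_pathOf, ← mem_pathOf, h2]

lemma bm_eq {ν : RankOrd α → ℝ} {P : Finset α → α → ℝ} (hr : Rationalizes ν P)
    {x : α} {A : Finset α} (hx : x ∈ A) :
    bm P x A = ∑ π : RankOrd α, if inM π x A then ν π else 0 := by
  have step1 : bm P x A = ∑ A' ∈ Finset.univ.powerset.filter (fun A' => A ⊆ A'),
      (-1 : ℝ) ^ (A' \ A).card *
        ∑ π : RankOrd α, if ∀ y ∈ A', y ≠ x → (π y : ℕ) < (π x : ℕ) then ν π else 0 := by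
    unfold bm
    apply Finset.sum_congr rfl
    intro A' hA'
    rw [Finset.mem_filter] at hA'
    have hxA' : x ∈ A' := hA'.2 hx
    rw [hr.2 A' ⟨x, hxA'⟩ x hxA']
    rfl
  rw [step1]
  simp_rw [Finset.mul_sum]
  rw [Finset.sum_comm]
  apply Finset.sum_congr rfl
  intro π _
  set B : Finset α := Finset.univ.filter (fun y => y = x ∨ (π y : ℕ) < (π x : ℕ)) with hB
  have hmemB : ∀ y, y ∈ B ↔ (y = x ∨ (π y : ℕ) < (π x : ℕ)) := by
    intro y; simp [hB]
  have hcond : ∀ A' : Finset α, ((∀ y ∈ A', y ≠ x → (π y : ℕ) < (π x : ℕ)) ↔ A' ⊆ B) := by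
    intro A'
    constructor
    · intro hc y hy
      rw [hmemB]
      by_cases hyx : y = x
      · exact Or.inl hyx
      · exact Or.inr (hc y hy hyx)
    · intro hc y hy hyx
      have := (hmemB y).1 (hc hy)
      tauto
  have hrw : ∀ A' : Finset α, ((-1 : ℝ) ^ (A' \ A).card *
        if ∀ y ∈ A', y ≠ x → (π y : ℕ) < (π x : ℕ) then ν π else 0)
      = if A' ⊆ B then (-1 : ℝ) ^ (A' \ A).card * ν π else 0 := by
    intro A'
    rw [if_congr (hcond A') rfl rfl, mul_ite, mul_zero]
  simp_rw [hrw]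
  rw [← Finset.sum_filter]
  have hinM : inM π x A ↔ (A ⊆ B ∧ B ⊆ A) := by
    constructor
    · rintro ⟨h1, h2⟩
      refine ⟨(hcond A).1 h2, ?_⟩
      intro z hz
      by_contra hzA
      have := h1 z hzA
      rcases (hmemB z).1 hz with rfl | hlt
      · exact hzA hx
      · omega
    · rintro ⟨h1, h2⟩
      refine ⟨?_, (hcond A).2 h1⟩
      intro z hz
      have hzB : z ∉ B := fun h => hz (h2 h)
      rw [hmemB] at hzB
      push_neg at hzB
      have : (π z : ℕ) ≠ (π x : ℕ) := fun he => hzB.1 (π.injective (Fin.ext he))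
      omega
  by_cases hAB : A ⊆ B
  · have hmain : ∑ A' ∈ (Finset.univ.powerset.filter (fun A' => A ⊆ A')).filter (fun A' => A' ⊆ B),
        (-1 : ℝ) ^ (A' \ A).card * ν π
        = ∑ S ∈ (B \ A).powerset, (-1 : ℝ) ^ S.card * ν π := by
      apply Finset.sum_nbij' (i := fun A' => A' \ A) (j := fun S => A ∪ S)
      · intro a ha
        simp only [Finset.mem_filter, Finset.mem_powerset] at ha ⊢
        exact Finset.sdiff_subset_sdiff ha.2 le_rfl
      · intro S hS
        simp only [Finset.mem_filter, Finset.mem_powerset] at hS ⊢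
        refine ⟨⟨Finset.subset_univ _, Finset.subset_union_left⟩, ?_⟩
        exact Finset.union_subset hAB (hS.trans Finset.sdiff_subset)
      · intro a ha
        simp only [Finset.mem_filter, Finset.mem_powerset] at ha
        exact Finset.union_sdiff_of_subset ha.1.2
      · intro S hS
        simp only [Finset.mem_powerset] at hS
        apply Finset.union_sdiff_cancel_left
        exact Finset.disjoint_sdiff.mono_right hS
      · intro a ha; rfl
    have hpow : (∑ m ∈ (B \ A).powerset, (-1 : ℝ) ^ m.card)
        = if B \ A = ∅ then 1 else 0 := by
      have hz := Finset.sum_powerset_neg_one_pow_card (x := B \ A)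
      have hcast : ((∑ m ∈ (B \ A).powerset, (-1 : ℤ) ^ m.card : ℤ) : ℝ)
          = ∑ m ∈ (B \ A).powerset, (-1 : ℝ) ^ m.card := by push_cast; rfl
      rw [← hcast, hz]
      split_ifs <;> norm_num
    rw [hmain, ← Finset.sum_mul, hpow]
    by_cases hBA : B ⊆ A
    · have : B \ A = ∅ := by rwa [Finset.sdiff_eq_empty_iff_subset]
      rw [if_pos this, if_pos (hinM.2 ⟨hAB, hBA⟩), one_mul]
    · have : B \ A ≠ ∅ := by
        rw [Ne, Finset.sdiff_eq_empty_iff_subset]; exact hBA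
      rw [if_neg this, if_neg (fun h => hBA (hinM.1 h).2), zero_mul]
  · have hempty : (Finset.univ.powerset.filter (fun A' => A ⊆ A')).filter (fun A' => A' ⊆ B) = ∅ := by
      rw [Finset.filter_eq_empty_iff]
      intro A' hA'
      rw [Finset.mem_filter] at hA'
      exact fun h => hAB (hA'.2.trans h)
    rw [hempty, Finset.sum_empty, if_neg (fun h => hAB (hinM.1 h).1)]

lemma pathOf_isPath (σ : RankOrd α) : IsPath (pathOf σ) := by
  refine ⟨pathOf_zero σ, pathOf_of_le le_rfl, ?_⟩
  intro i hi
  constructor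
  · intro w hw
    rw [mem_pathOf] at hw ⊢
    omega
  · rw [sdiff_pathOf σ i hi, Finset.card_singleton]

lemma supported_of_pos {ν : RankOrd α → ℝ} {P : Finset α → α → ℝ}
    (hr : Rationalizes ν P) {σ : RankOrd α} (hσ : 0 < ν σ) :
    SupportedPath P (pathOf σ) := by
  refine ⟨pathOf_isPath σ, ?_⟩
  intro i hi x hx
  rw [sdiff_pathOf σ i hi, Finset.mem_singleton] at hx
  subst hx
  have hM := inM_topAt σ i hi
  have hxA : topAt σ i hi ∈ pathOf σ i := by rw [mem_pathOf, pi_topAt]; omega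
  rw [bm_eq hr hxA]
  calc (0 : ℝ) < ν σ := hσ
    _ = (if inM σ (topAt σ i hi) (pathOf σ i) then ν σ else 0) := by rw [if_pos hM]
    _ ≤ _ := by
        apply Finset.single_le_sum (f := fun τ => if inM τ (topAt σ i hi) (pathOf σ i) then ν τ else 0)
          (fun τ _ => ?_) (Finset.mem_univ σ)
        split_ifs
        · exact hr.1.1 τ
        · exact le_rfl

lemma key_lemma {P : Finset α → α → ℝ} {ν₁ ν₂ : RankOrd α → ℝ}
    (h1 : Rationalizes ν₁ P) (h2 : Rationalizes ν₂ P)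
    (hnb : ¬ ∃ ρ ρ' : ℕ → Finset α,
      SupportedPath P ρ ∧ SupportedPath P ρ' ∧ BranchingPair ρ ρ')
    {π : RankOrd α} (hπ : ν₂ π < ν₁ π) : False := by
  set n := Fintype.card α with hn
  have hδ : ∀ (x : α) (A : Finset α), x ∈ A →
      ∑ σ : RankOrd α, (if inM σ x A then ν₁ σ - ν₂ σ else 0) = 0 := by
    intro x A hx
    have hsplit : ∀ σ : RankOrd α, (if inM σ x A then ν₁ σ - ν₂ σ else 0)
        = (if inM σ x A then ν₁ σ else 0) - (if inM σ x A then ν₂ σ else 0) := by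
      intro σ; split_ifs <;> ring
    rw [Finset.sum_congr rfl (fun σ _ => hsplit σ), Finset.sum_sub_distrib,
      ← bm_eq h1 hx, ← bm_eq h2 hx]
    ring
  have hν₁π : 0 < ν₁ π := lt_of_le_of_lt (h2.1.1 π) hπ
  by_cases hn1 : n ≤ 1
  · -- trivial case : at most one linear order
    have hss : Subsingleton (Fin n) := by
      interval_cases n
      · exact inferInstance
      · exact inferInstance
    have hall : ∀ σ : RankOrd α, σ = π := fun σ =>
      Equiv.ext fun w => Subsingleton.elim _ _
    have huniv : (Finset.univ : Finset (RankOrd α)) = {π} := by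
      apply Finset.eq_singleton_iff_unique_mem.2
      exact ⟨Finset.mem_univ _, fun σ _ => hall σ⟩
    have e1 := h1.1.2
    have e2 := h2.1.2
    rw [huniv, Finset.sum_singleton] at e1 e2
    rw [e1, e2] at hπ
    exact lt_irrefl _ hπ
  push_neg at hn1
  -- for every edge of π's path there is a negative-δ order through it
  have hstep : ∀ i, ∀ hi : i < n, ∃ σ : RankOrd α, ν₁ σ - ν₂ σ < 0 ∧
      pathOf σ i = pathOf π i ∧ pathOf σ (i + 1) = pathOf π (i + 1) := by
    intro i hi
    set x := topAt π i hi with hx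
    set A := pathOf π i with hA
    have hxA : x ∈ A := by rw [hA, mem_pathOf, hx, pi_topAt]; omega
    have hflow := hδ x A hxA
    by_contra hcon
    push_neg at hcon
    have hge : ∀ σ : RankOrd α, 0 ≤ (if inM σ x A then ν₁ σ - ν₂ σ else 0) := by
      intro σ
      split_ifs with hM
      · by_contra hlt
        push_neg at hlt
        obtain ⟨hp1, hp2⟩ := inM_pathOf_agree hi hM
        exact absurd (hcon σ hlt hp1) (fun h => h hp2)
      · exact le_rfl
    have hle : (if inM π x A then ν₁ π - ν₂ π else 0) ≤
        ∑ σ : RankOrd α, (if inM σ x A then ν₁ σ - ν₂ σ else 0) :=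
      Finset.single_le_sum (fun σ _ => hge σ) (Finset.mem_univ π)
    rw [hflow, if_pos (inM_topAt π i hi)] at hle
    linarith
  -- the predicate : some negative-δ order agrees with π's path up to position j
  set Q : ℕ → Prop := fun j => ∃ σ : RankOrd α, ν₁ σ - ν₂ σ < 0 ∧
    ∀ m ≤ j, pathOf σ m = pathOf π m with hQ
  have hQ1 : Q 1 := by
    obtain ⟨σ, hneg, hp0, hp1⟩ := hstep 0 (by omega)
    exact ⟨σ, hneg, fun m hm => by interval_cases m <;> assumption⟩
  set j := Nat.findGreatest Q n with hj
  have hQj : Q j := Nat.findGreatest_spec (show 1 ≤ n by omega) hQ1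
  have hj1 : 1 ≤ j := Nat.le_findGreatest (by omega) hQ1
  have hjn : j ≤ n := Nat.findGreatest_le n
  obtain ⟨σ, hσneg, hσagr⟩ := hQj
  have hσπ : σ ≠ π := by
    intro he; rw [he] at hσneg; linarith
  have hjn2 : j ≤ n - 2 := by
    by_contra hc
    push_neg at hc
    have hpe : pathOf σ = pathOf π := by
      funext m
      by_cases hm : m ≤ n - 1
      · exact hσagr m (by omega)
      · rw [pathOf_of_le (by omega), pathOf_of_le (by omega)]
    exact hσπ (pathOf_injective hpe)
  have hmax : ¬ Q (j + 1) :=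
    Nat.findGreatest_is_greatest (lt_add_one j) (by omega)
  have hσdiff : pathOf σ (j + 1) ≠ pathOf π (j + 1) := by
    intro he
    apply hmax
    refine ⟨σ, hσneg, fun m hm => ?_⟩
    by_cases hmj : m ≤ j
    · exact hσagr m hmj
    · have : m = j + 1 := by omega
      rw [this]; exact he
  obtain ⟨τ, hτneg, hτj, hτj1⟩ := hstep j (by omega)
  have hτnotagr : ∃ m ≤ j - 1, pathOf τ m ≠ pathOf π m := by
    by_contra hc
    push_neg at hc
    apply hmax
    refine ⟨τ, hτneg, fun m hm => ?_⟩
    by_cases hm1 : m ≤ j - 1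
    · exact hc m hm1
    · by_cases hm2 : m = j
      · rw [hm2]; exact hτj
      · have : m = j + 1 := by omega
        rw [this]; exact hτj1
  obtain ⟨m₀, hm₀j, hm₀ne⟩ := hτnotagr
  set R : ℕ → Prop := fun m => pathOf τ m ≠ pathOf π m with hR
  set d := Nat.findGreatest R (j - 1) with hd
  have hdR : R d := Nat.findGreatest_spec hm₀j hm₀ne
  have hdj : d ≤ j - 1 := Nat.findGreatest_le _
  have hd1 : 1 ≤ d := by
    rcases Nat.eq_zero_or_pos d with h0 | h0
    · exfalso
      apply hdR
      rw [h0, pathOf_zero, pathOf_zero]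
    · exact h0
  have hdmax : ∀ m, d < m → m ≤ j - 1 → pathOf τ m = pathOf π m := by
    intro m hdm hmj
    by_contra hc
    exact Nat.findGreatest_is_greatest hdm hmj hc
  -- build the branching pair
  have hτsupp : SupportedPath P (pathOf τ) :=
    supported_of_pos h2 (by have := h1.1.1 τ; linarith)
  have hσsupp : SupportedPath P (pathOf σ) :=
    supported_of_pos h2 (by have := h1.1.1 σ; linarith)
  apply hnb
  refine ⟨pathOf τ, pathOf σ, hτsupp, hσsupp, d + 1, j, by omega, by omega, by omega, ?_, ?_, ?_⟩
  · -- differ at position d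
    have : d + 1 - 1 = d := by omega
    rw [this, hσagr d (by omega)]
    exact hdR
  · rw [hτj1]
    exact fun h => hσdiff h.symm
  · intro m hm1 hm2
    rw [hσagr m hm2]
    by_cases hmj : m ≤ j - 1
    · exact hdmax m (by omega) hmj
    · have : m = j := by omega
      rw [this]; exact hτj

end Aux

/-- Sufficiency direction of Theorem 1: if the probability flow diagram of a rationalizable
system of choice probabilities has no pair of supported branching paths, then the
rationalizing distribution is unique. -/
theorem unique_of_no_supported_branching {α : Type*} [Fintype α] [DecidableEq α]
    (P : Finset α → α → ℝ) (hrat : ∃ ν : RankOrd α → ℝ, Rationalizes ν P)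
    (hnb : ¬ ∃ ρ ρ' : ℕ → Finset α,
      SupportedPath P ρ ∧ SupportedPath P ρ' ∧ BranchingPair ρ ρ') :
    ∀ ν₁ ν₂ : RankOrd α → ℝ, Rationalizes ν₁ P → Rationalizes ν₂ P → ν₁ = ν₂ := by
  intro ν₁ ν₂ h1 h2
  by_contra hne
  have : ∃ π, ν₁ π ≠ ν₂ π := by
    by_contra h
    push_neg at h
    exact hne (funext h)
  obtain ⟨π, hπ⟩ := this
  rcases lt_or_gt_of_ne hπ with hlt | hgt
  · exact (key_lemma h2 h1 hnb hlt).elim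
  · exact (key_lemma h1 h2 hnb hgt).elim
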